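/- Fix integers A ≥ 2, a real Δ ∈ (0, 1/8), and γ > 0 with γ ≤ A/(48Δ). Over Π = Fin A define the Bernoulli bandit models M_1(π) := Ber(1/2 + Δ·1{π = 1}) and, for 2 ≤ i ≤ A, M_i(π) := Ber(1/2 + Δ·1{π = 1} + 2Δ·1{π = i}), and write g_M(π) := max_{π'} f^M(π') − f^M(π). Then: (i) every M_i has suboptimality gap exactly Δ, i.e. the mean of its best arm exceeds the mean of every other arm by at least Δ; (ii) |g_{M_i}(π) − g_{M_1}(π)| ≤ Δ for all i and all π; and (iii) for every probability distribution p on Fin A: max_{1≤i≤A} ∑_{π} p(π)·[ g_{M_i}(π) − γ·D_H²(M_i(π), M_1(π)) ] ≥ Δ/4. -/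
import Mathlib


open MeasureTheory
open scoped ENNReal

/-- Squared Hellinger distance `D_H²(P,Q) = ∫ (√(dP/dν) − √(dQ/dν))² dν`
computed with the dominating measure `ν = P + Q`. -/
noncomputable def sqHellinger {α : Type*} [MeasurableSpace α] (P Q : Measure α) : ℝ :=
  ∫ x, (Real.sqrt ((P.rnDeriv (P + Q)) x).toReal
      - Real.sqrt ((Q.rnDeriv (P + Q)) x).toReal) ^ 2 ∂(P + Q)

/-- Bernoulli distribution on `{0,1} ⊆ ℝ` with mean `q`. -/
noncomputable def bern (q : ℝ) : Measure ℝ :=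
  ENNReal.ofReal q • Measure.dirac 1 + ENNReal.ofReal (1 - q) • Measure.dirac 0

/-- Mean reward `f^M(π)` of a bandit model `M` at decision `π`. -/
noncomputable def meanReward {A : ℕ} (M : Fin A → Measure ℝ) (π : Fin A) : ℝ :=
  ∫ x, x ∂(M π)

/-- Regret `g_M(π) = max_{π'} f^M(π') − f^M(π)` of decision `π` under `M`. -/
noncomputable def regretFn {A : ℕ} (M : Fin A → Measure ℝ) (π : Fin A) : ℝ :=
  (⨆ π' : Fin A, meanReward M π') - meanReward M π

/-- The hard model `M_i`: `M_i(π) = Ber(1/2 + Δ·1{π = 1} + 2Δ·1{π = i})` (the first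
arm is the one of index `0`); for an index `i` of value `0` this is the model `M_1`. -/
noncomputable def gapModel {A : ℕ} (Δ : ℝ) (i : Fin A) : Fin A → Measure ℝ := fun π =>
  bern (1 / 2 + (if (π : ℕ) = 0 then Δ else 0) + (if (i : ℕ) ≠ 0 ∧ π = i then 2 * Δ else 0))

/-- The reference model `M_1(π) = Ber(1/2 + Δ·1{π = 1})`. -/
noncomputable def gapModelBase {A : ℕ} (Δ : ℝ) : Fin A → Measure ℝ := fun π =>
  bern (1 / 2 + if (π : ℕ) = 0 then Δ else 0)

instance bern.isFiniteMeasure (q : ℝ) : IsFiniteMeasure (bern q) := by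
  constructor
  rw [bern]
  simp [ENNReal.add_lt_top, ENNReal.ofReal_lt_top]

lemma integrable_dirac'' {f : ℝ → ℝ} (a : ℝ) : Integrable f (Measure.dirac a) := by
  have h : (fun _ : ℝ => f a) =ᵐ[Measure.dirac a] f := by
    rw [MeasureTheory.ae_dirac_eq]
    exact Filter.eventually_pure.2 rfl
  exact (integrable_const (f a)).congr h

lemma integral_two_point (a b : ℝ≥0∞) (ha : a ≠ ⊤) (hb : b ≠ ⊤) (f : ℝ → ℝ) :
    ∫ x, f x ∂(a • Measure.dirac (1:ℝ) + b • Measure.dirac 0)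
      = a.toReal * f 1 + b.toReal * f 0 := by
  rw [integral_add_measure ((integrable_dirac'' 1).smul_measure ha)
      ((integrable_dirac'' 0).smul_measure hb),
    integral_smul_measure, integral_smul_measure, integral_dirac f 1, integral_dirac f 0]
  simp [smul_eq_mul]

lemma integral_id_bern {q : ℝ} (h0 : 0 ≤ q) : ∫ x, x ∂(bern q) = q := by
  rw [bern, integral_two_point _ _ ENNReal.ofReal_ne_top ENNReal.ofReal_ne_top (fun x => x)]
  simp [ENNReal.toReal_ofReal h0]

lemma withDensity_dirac'' {f : ℝ → ℝ≥0∞} (hf : Measurable f) (a : ℝ) :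
    (Measure.dirac a).withDensity f = f a • Measure.dirac a := by
  classical
  ext s hs
  rw [withDensity_apply _ hs, setLIntegral_dirac' hf hs]
  simp [Measure.dirac_apply' _ hs, Set.indicator]

lemma withDensity_two_point (a b : ℝ≥0∞) {f : ℝ → ℝ≥0∞} (hf : Measurable f) :
    (a • Measure.dirac (1:ℝ) + b • Measure.dirac 0).withDensity f
      = (a * f 1) • Measure.dirac 1 + (b * f 0) • Measure.dirac 0 := by
  rw [withDensity_add_measure, withDensity_smul_measure, withDensity_smul_measure,
    withDensity_dirac'' hf, withDensity_dirac'' hf, smul_smul, smul_smul]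

lemma sqHellinger_bern {p q : ℝ} (hp0 : 0 < p) (hp1 : p < 1) (hq0 : 0 < q) (hq1 : q < 1) :
    sqHellinger (bern p) (bern q)
      = (Real.sqrt p - Real.sqrt q) ^ 2 + (Real.sqrt (1 - p) - Real.sqrt (1 - q)) ^ 2 := by
  set ν : Measure ℝ := bern p + bern q with hνdef
  have hc : (0:ℝ) < p + q := by linarith
  have hd : (0:ℝ) < (1 - p) + (1 - q) := by linarith
  have hν : ν = ENNReal.ofReal (p + q) • Measure.dirac 1
      + ENNReal.ofReal ((1 - p) + (1 - q)) • Measure.dirac 0 := by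
    rw [hνdef, bern, bern, ENNReal.ofReal_add hp0.le hq0.le,
      ENNReal.ofReal_add (by linarith : (0:ℝ) ≤ 1 - p) (by linarith : (0:ℝ) ≤ 1 - q),
      add_smul, add_smul]
    abel
  set f1 : ℝ → ℝ≥0∞ := fun x =>
    if x = 1 then ENNReal.ofReal (p / (p + q)) else ENNReal.ofReal ((1 - p) / ((1 - p) + (1 - q)))
    with hf1def
  set f2 : ℝ → ℝ≥0∞ := fun x =>
    if x = 1 then ENNReal.ofReal (q / (p + q)) else ENNReal.ofReal ((1 - q) / ((1 - p) + (1 - q)))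
    with hf2def
  have hf1 : Measurable f1 := Measurable.ite (measurableSet_eq) measurable_const measurable_const
  have hf2 : Measurable f2 := Measurable.ite (measurableSet_eq) measurable_const measurable_const
  have key : ∀ (r : ℝ), 0 < r → r < 1 →
      ν.withDensity (fun x => if x = 1 then ENNReal.ofReal (r / (p + q))
        else ENNReal.ofReal ((1 - r) / ((1 - p) + (1 - q)))) = bern r := by
    intro r hr0 hr1
    rw [hν, withDensity_two_point _ _
      (Measurable.ite (measurableSet_eq) measurable_const measurable_const)]
    norm_num
    rw [← ENNReal.ofReal_mul hc.le, ← ENNReal.ofReal_mul hd.le,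
      mul_div_cancel₀ _ hc.ne', mul_div_cancel₀ _ hd.ne']
    rfl
  have h1 : f1 =ᵐ[ν] (bern p).rnDeriv ν :=
    Measure.eq_rnDeriv hf1 Measure.MutuallySingular.zero_left (by rw [zero_add, key p hp0 hp1])
  have h2 : f2 =ᵐ[ν] (bern q).rnDeriv ν :=
    Measure.eq_rnDeriv hf2 Measure.MutuallySingular.zero_left (by rw [zero_add, key q hq0 hq1])
  have hint : sqHellinger (bern p) (bern q)
      = ∫ x, (Real.sqrt (f1 x).toReal - Real.sqrt (f2 x).toReal) ^ 2 ∂ν := by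
    rw [sqHellinger]
    refine integral_congr_ae ?_
    filter_upwards [h1, h2] with x e1 e2
    rw [← e1, ← e2]
  rw [hint, hν, integral_two_point _ _ ENNReal.ofReal_ne_top ENNReal.ofReal_ne_top]
  simp only [hf1def, hf2def]
  norm_num
  rw [ENNReal.toReal_ofReal hc.le, ENNReal.toReal_ofReal hd.le,
    ENNReal.toReal_ofReal (by positivity : (0:ℝ) ≤ p/(p+q)),
    ENNReal.toReal_ofReal (by positivity : (0:ℝ) ≤ q/(p+q)),
    ENNReal.toReal_ofReal (div_nonneg (by linarith) hd.le : (0:ℝ) ≤ (1-p)/((1-p)+(1-q))),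
    ENNReal.toReal_ofReal (div_nonneg (by linarith) hd.le : (0:ℝ) ≤ (1-q)/((1-p)+(1-q)))]
  rw [Real.sqrt_div hp0.le, Real.sqrt_div hq0.le,
    Real.sqrt_div (by linarith : (0:ℝ) ≤ 1 - p), Real.sqrt_div (by linarith : (0:ℝ) ≤ 1 - q),
    div_sub_div_same, div_sub_div_same, div_pow, div_pow,
    Real.sq_sqrt hc.le, Real.sq_sqrt hd.le,
    mul_div_cancel₀ _ hc.ne', mul_div_cancel₀ _ hd.ne']

lemma sqHellinger_self {α : Type*} [MeasurableSpace α] (P : Measure α) : sqHellinger P P = 0 := by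
  simp [sqHellinger]

lemma gapModel_eq_base {A : ℕ} {Δ : ℝ} {i π : Fin A} (h : ¬((i:ℕ) ≠ 0 ∧ π = i)) :
    gapModel Δ i π = gapModelBase Δ π := by
  simp only [gapModel, gapModelBase, if_neg h, add_zero]

lemma base_eq {A : ℕ} (hA : 0 < A) (Δ : ℝ) :
    gapModelBase (A := A) Δ = gapModel Δ ⟨0, hA⟩ := by
  funext π
  exact (gapModel_eq_base (by simp)).symm

lemma mean_gapModel {A : ℕ} {Δ : ℝ} (h0 : 0 ≤ Δ) (i π : Fin A) :
    meanReward (gapModel Δ i) π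
      = 1/2 + (if (π:ℕ) = 0 then Δ else 0) + (if (i:ℕ) ≠ 0 ∧ π = i then 2*Δ else 0) := by
  rw [meanReward]
  simp only [gapModel]
  exact integral_id_bern (by split_ifs <;> linarith)

lemma sup_mean {A : ℕ} (hA : 0 < A) {Δ : ℝ} (h0 : 0 < Δ) (i : Fin A) :
    (⨆ π' : Fin A, meanReward (gapModel Δ i) π')
      = 1/2 + Δ + (if (i:ℕ) = 0 then 0 else Δ) := by
  haveI : Nonempty (Fin A) := ⟨⟨0, hA⟩⟩
  apply le_antisymm
  · apply ciSup_le
    intro π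
    rw [mean_gapModel h0.le]
    by_cases hi : (i:ℕ) = 0
    · rw [if_neg (show ¬(((i:ℕ) ≠ 0) ∧ π = i) from fun h => h.1 hi), if_pos hi]
      split_ifs <;> linarith
    · rw [if_neg hi]
      by_cases hc : π = i
      · have hπ : ¬((π:ℕ) = 0) := by rw [hc]; exact hi
        rw [if_neg hπ, if_pos ⟨hi, hc⟩]; linarith
      · rw [if_neg (show ¬(((i:ℕ) ≠ 0) ∧ π = i) from fun h => hc h.2)]; split_ifs <;> linarith
  · by_cases hi : (i:ℕ) = 0
    · rw [if_pos hi]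
      have h1 : meanReward (gapModel Δ i) ⟨0, hA⟩ = 1/2 + Δ := by
        rw [mean_gapModel h0.le, if_pos rfl, if_neg (show ¬(((i:ℕ) ≠ 0) ∧ (⟨0, hA⟩ : Fin A) = i) from fun h => h.1 hi)]; ring
      calc (1:ℝ)/2 + Δ + 0 = meanReward (gapModel Δ i) ⟨0, hA⟩ := by rw [h1]; ring
        _ ≤ _ := le_ciSup (Set.Finite.bddAbove (Set.finite_range _)) _
    · rw [if_neg hi]
      have h1 : meanReward (gapModel Δ i) i = 1/2 + 2*Δ := by
        rw [mean_gapModel h0.le, if_neg hi, if_pos ⟨hi, rfl⟩]; ring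
      calc (1:ℝ)/2 + Δ + Δ = meanReward (gapModel Δ i) i := by rw [h1]; ring
        _ ≤ _ := le_ciSup (Set.Finite.bddAbove (Set.finite_range _)) _

lemma regret_gapModel {A : ℕ} (hA : 0 < A) {Δ : ℝ} (h0 : 0 < Δ) (i π : Fin A) :
    regretFn (gapModel Δ i) π
      = 1/2 + Δ + (if (i:ℕ) = 0 then 0 else Δ)
        - (1/2 + (if (π:ℕ) = 0 then Δ else 0) + (if (i:ℕ) ≠ 0 ∧ π = i then 2*Δ else 0)) := by
  rw [regretFn, sup_mean hA h0, mean_gapModel h0.le]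

lemma hell_num_bound {Δ : ℝ} (h0 : 0 < Δ) (h1 : Δ < 1/8) :
    sqHellinger (bern (1/2 + 2*Δ)) (bern (1/2)) ≤ 6 * Δ^2 := by
  rw [sqHellinger_bern (by linarith) (by linarith) (by norm_num) (by norm_num)]
  have e12 : (1:ℝ) - (1/2 + 2*Δ) = 1/2 - 2*Δ := by ring
  have e12' : (1:ℝ) - 1/2 = 1/2 := by norm_num
  rw [e12, e12']
  set a := Real.sqrt (1/2 + 2*Δ) with hadef
  set b := Real.sqrt (1/2 : ℝ) with hbdef
  set c := Real.sqrt (1/2 - 2*Δ) with hcdef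
  have ha2 : a^2 = 1/2 + 2*Δ := Real.sq_sqrt (by linarith)
  have hb2 : b^2 = 1/2 := Real.sq_sqrt (by norm_num)
  have hc2 : c^2 = 1/2 - 2*Δ := Real.sq_sqrt (by linarith)
  have ha0 : 0 ≤ a := Real.sqrt_nonneg _
  have hb0 : 0 ≤ b := Real.sqrt_nonneg _
  have hc0 : 0 ≤ c := Real.sqrt_nonneg _
  have hba : b ≤ a := Real.sqrt_le_sqrt (by linarith)
  have hbh : (1:ℝ)/2 ≤ b := by nlinarith [hb2, hb0]
  have hch : (1:ℝ)/2 ≤ c := by nlinarith [hc2, hc0]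
  have h4a : (a - b)^2 * (a + b)^2 = 4*Δ^2 := by
    rw [← mul_pow, show (a-b)*(a+b) = a^2 - b^2 by ring, ha2, hb2]; ring
  have h4c : (b - c)^2 * (b + c)^2 = 4*Δ^2 := by
    rw [← mul_pow, show (b-c)*(b+c) = b^2 - c^2 by ring, hb2, hc2]; ring
  have hgea : 2 ≤ (a + b)^2 := by
    have h := pow_le_pow_left₀ (by linarith : (0:ℝ) ≤ 2*b) (by linarith : 2*b ≤ a + b) 2
    nlinarith [h, hb2]
  have hgec : 1 ≤ (b + c)^2 := by
    have h := pow_le_pow_left₀ (by norm_num : (0:ℝ) ≤ 1) (by linarith : (1:ℝ) ≤ b + c) 2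
    nlinarith [h]
  have t1 : (a - b)^2 ≤ 2*Δ^2 := by
    have h := mul_le_mul_of_nonneg_left hgea (sq_nonneg (a - b))
    linarith [h, h4a]
  have t2 : (b - c)^2 ≤ 4*Δ^2 := by
    have h := mul_le_mul_of_nonneg_left hgec (sq_nonneg (b - c))
    linarith [h, h4c]
  linarith [t1, t2]

lemma mean_closed {A : ℕ} {Δ : ℝ} (h0 : 0 ≤ Δ) {i : Fin A} (π : Fin A) (hi : (i:ℕ) ≠ 0) :
    meanReward (gapModel Δ i) π
      = if π = i then 1/2 + 2*Δ else if (π:ℕ) = 0 then 1/2 + Δ else 1/2 := by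
  rw [mean_gapModel h0]
  by_cases hc : π = i
  · rw [if_pos hc, if_pos (show ((i:ℕ) ≠ 0 ∧ π = i) from ⟨hi, hc⟩),
      if_neg (show ¬((π:ℕ) = 0) from fun h => hi (hc ▸ h))]
    ring
  · rw [if_neg hc, if_neg (show ¬((i:ℕ) ≠ 0 ∧ π = i) from fun h => hc h.2)]
    split_ifs <;> ring

lemma mean_closed0 {A : ℕ} {Δ : ℝ} (h0 : 0 ≤ Δ) {i : Fin A} (π : Fin A) (hi : (i:ℕ) = 0) :
    meanReward (gapModel Δ i) π = if (π:ℕ) = 0 then 1/2 + Δ else 1/2 := by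
  rw [mean_gapModel h0, if_neg (show ¬((i:ℕ) ≠ 0 ∧ π = i) from fun h => h.1 hi)]
  split_ifs <;> ring

lemma regret_closed {A : ℕ} (hA : 0 < A) {Δ : ℝ} (h0 : 0 < Δ) {i : Fin A} (π : Fin A)
    (hi : (i:ℕ) ≠ 0) :
    regretFn (gapModel Δ i) π = if π = i then 0 else if (π:ℕ) = 0 then Δ else 2*Δ := by
  rw [regretFn, sup_mean hA h0, if_neg hi, mean_closed h0.le π hi]
  split_ifs <;> ring

lemma regret_closed0 {A : ℕ} (hA : 0 < A) {Δ : ℝ} (h0 : 0 < Δ) {i : Fin A} (π : Fin A)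
    (hi : (i:ℕ) = 0) :
    regretFn (gapModel Δ i) π = if (π:ℕ) = 0 then 0 else Δ := by
  rw [regretFn, sup_mean hA h0, if_pos hi, mean_closed0 h0.le π hi]
  split_ifs <;> ring


/-- gap-dependent lower bound on the Decision-Estimation Coefficient
for multi-armed bandits with uniform suboptimality gap `Δ`. -/
theorem mab_gap_dec_lower_bound (A : ℕ) (hA : 2 ≤ A) (Δ γ : ℝ)
    (hΔ : Δ ∈ Set.Ioo (0 : ℝ) (1 / 8)) (hγ : 0 < γ) (hγA : γ ≤ (A : ℝ) / (48 * Δ)) :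
    (∀ i : Fin A, ∃ best : Fin A,
        (∀ π, meanReward (gapModel Δ i) π ≤ meanReward (gapModel Δ i) best) ∧
        ∀ π, π ≠ best → Δ ≤ meanReward (gapModel Δ i) best - meanReward (gapModel Δ i) π) ∧
      (∀ (i : Fin A) (π : Fin A),
        |regretFn (gapModel Δ i) π - regretFn (gapModelBase Δ) π| ≤ Δ) ∧
      ∀ p : Fin A → ℝ, (∀ π, 0 ≤ p π) → (∑ π, p π) = 1 →
        ∃ i : Fin A, Δ / 4 ≤
          ∑ π : Fin A, p π *
            (regretFn (gapModel Δ i) π - γ * sqHellinger (gapModel Δ i π) (gapModelBase Δ π)) := by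
  obtain ⟨hΔ0, hΔ8⟩ := hΔ
  have hA0 : 0 < A := by omega
  set z : Fin A := ⟨0, hA0⟩ with hzdef
  have hzval : (z : ℕ) = 0 := rfl
  have hval0 : ∀ π : Fin A, (π : ℕ) = 0 ↔ π = z := by
    intro π
    constructor
    · intro h; exact Fin.val_injective (by rw [h, hzval])
    · intro h; rw [h, hzval]
  refine ⟨?_, ?_, ?_⟩
  · -- part (i)
    intro i
    by_cases hi : (i : ℕ) = 0
    · refine ⟨z, fun π => ?_, fun π hπ => ?_⟩
      · rw [mean_closed0 hΔ0.le π hi, mean_closed0 hΔ0.le z hi, if_pos hzval]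
        split_ifs <;> linarith
      · rw [mean_closed0 hΔ0.le π hi, mean_closed0 hΔ0.le z hi, if_pos hzval,
          if_neg (fun h => hπ ((hval0 π).1 h))]
        linarith
    · refine ⟨i, fun π => ?_, fun π hπ => ?_⟩
      · rw [mean_closed hΔ0.le π hi, mean_closed hΔ0.le i hi, if_pos rfl]
        split_ifs <;> linarith
      · rw [mean_closed hΔ0.le π hi, mean_closed hΔ0.le i hi, if_pos rfl, if_neg hπ]
        split_ifs <;> linarith
  · -- part (ii)
    intro i π
    rw [base_eq hA0, regret_closed0 hA0 hΔ0 π (show ((⟨0, hA0⟩ : Fin A) : ℕ) = 0 from rfl)]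
    by_cases hi : (i : ℕ) = 0
    · rw [regret_closed0 hA0 hΔ0 π hi]
      refine abs_le.2 ⟨?_, ?_⟩ <;> split_ifs <;> linarith
    · rw [regret_closed hA0 hΔ0 π hi]
      refine abs_le.2 ⟨?_, ?_⟩ <;> split_ifs <;> linarith
  · -- part (iii)
    intro p hp hsum
    by_cases hcase : p z ≤ 3/4
    · refine ⟨z, ?_⟩
      have hH : ∀ π, sqHellinger (gapModel Δ z π) (gapModelBase Δ π) = 0 := by
        intro π
        rw [gapModel_eq_base (show ¬(((z:ℕ) ≠ 0) ∧ π = z) from fun h => h.1 hzval)]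
        exact sqHellinger_self _
      have hreg : ∀ π, regretFn (gapModel Δ z) π = Δ - (if π = z then Δ else 0) := by
        intro π
        rw [regret_closed0 hA0 hΔ0 π hzval, if_congr (hval0 π) rfl rfl]
        split_ifs <;> ring
      have e : ∑ π : Fin A, p π *
          (regretFn (gapModel Δ z) π - γ * sqHellinger (gapModel Δ z π) (gapModelBase Δ π))
          = ∑ π : Fin A, (p π * Δ - (if π = z then p π * Δ else 0)) := by
        refine Finset.sum_congr rfl fun π _ => ?_
        rw [hH, hreg]
        split_ifs <;> ring
      rw [e, Finset.sum_sub_distrib, ← Finset.sum_mul, hsum,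
        Finset.sum_ite_eq' Finset.univ z (fun π => p π * Δ), if_pos (Finset.mem_univ z)]
      nlinarith [hΔ0]
    · push_neg at hcase
      set S : Finset (Fin A) := Finset.univ.erase z with hSdef
      have hSsum : ∑ π ∈ S, p π = 1 - p z := by
        have h := Finset.add_sum_erase Finset.univ p (Finset.mem_univ z)
        rw [hsum] at h
        linarith
      have hA1 : (1:ℝ) ≤ (A:ℝ) - 1 := by
        have : (2:ℝ) ≤ (A:ℝ) := by exact_mod_cast hA
        linarith
      have hScard : (S.card : ℝ) = (A:ℝ) - 1 := by
        rw [hSdef, Finset.card_erase_of_mem (Finset.mem_univ z), Finset.card_univ, Fintype.card_fin]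
        have h1 : 1 ≤ A := hA0
        push_cast [Nat.cast_sub h1]
        ring
      have hSne : S.Nonempty := by
        refine ⟨⟨1, by omega⟩, ?_⟩
        rw [hSdef, Finset.mem_erase]
        exact ⟨fun h => by simpa [hzdef] using congrArg Fin.val h, Finset.mem_univ _⟩
      obtain ⟨i, hiS, hismall⟩ : ∃ i ∈ S, p i ≤ (1 - p z) / ((A:ℝ) - 1) := by
        by_contra h
        push_neg at h
        have hlt := Finset.sum_lt_sum_of_nonempty hSne h
        rw [Finset.sum_const, hSsum, nsmul_eq_mul, hScard,
          mul_div_cancel₀ _ (by linarith : (A:ℝ) - 1 ≠ 0)] at hlt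
        exact lt_irrefl _ hlt
      have hiz : i ≠ z := (Finset.mem_erase.1 hiS).1
      have hi0 : (i : ℕ) ≠ 0 := fun h => hiz ((hval0 i).1 h)
      refine ⟨i, ?_⟩
      have hHi : sqHellinger (gapModel Δ i i) (gapModelBase Δ i) ≤ 6 * Δ^2 := by
        have e1 : gapModel Δ i i = bern (1/2 + 2*Δ) := by
          unfold gapModel
          rw [if_neg hi0, if_pos (show ((i:ℕ) ≠ 0 ∧ i = i) from ⟨hi0, rfl⟩)]
          norm_num
        have e2 : gapModelBase (A := A) Δ i = bern (1/2) := by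
          simp only [gapModelBase]
          rw [if_neg hi0]
          norm_num
        rw [e1, e2]
        exact hell_num_bound hΔ0 hΔ8
      have hregi : regretFn (gapModel Δ i) i = 0 := by
        rw [regret_closed hA0 hΔ0 i hi0, if_pos rfl]
      have hreglb : ∀ π, π ≠ i → Δ ≤ regretFn (gapModel Δ i) π := by
        intro π hπ
        rw [regret_closed hA0 hΔ0 π hi0, if_neg hπ]
        split_ifs <;> linarith
      have hterm : ∀ π ∈ Finset.univ, p π * Δ - (if π = i then p π * (Δ + γ * (6*Δ^2)) else 0)
          ≤ p π * (regretFn (gapModel Δ i) π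
              - γ * sqHellinger (gapModel Δ i π) (gapModelBase Δ π)) := by
        intro π _
        by_cases hπ : π = i
        · subst hπ
          rw [if_pos rfl, hregi]
          have h1 : γ * sqHellinger (gapModel Δ π π) (gapModelBase Δ π) ≤ γ * (6*Δ^2) :=
            mul_le_mul_of_nonneg_left hHi hγ.le
          have h2 := mul_le_mul_of_nonneg_left h1 (hp π)
          nlinarith [h2]
        · rw [if_neg hπ,
            gapModel_eq_base (show ¬(((i:ℕ) ≠ 0) ∧ π = i) from fun h => hπ h.2),
            sqHellinger_self]
          have h1 := mul_le_mul_of_nonneg_left (hreglb π hπ) (hp π)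
          nlinarith [h1]
      have hsum2 : ∑ π : Fin A, (p π * Δ - (if π = i then p π * (Δ + γ * (6*Δ^2)) else 0))
          = Δ - p i * (Δ + γ * (6*Δ^2)) := by
        rw [Finset.sum_sub_distrib, ← Finset.sum_mul, hsum,
          Finset.sum_ite_eq' Finset.univ i (fun π => p π * (Δ + γ * (6*Δ^2))),
          if_pos (Finset.mem_univ i)]
        ring
      have hmain := Finset.sum_le_sum hterm
      rw [hsum2] at hmain
      refine le_trans ?_ hmain
      have hγΔ : γ * (48 * Δ) ≤ (A:ℝ) := by
        rw [← le_div_iff₀ (by positivity : (0:ℝ) < 48 * Δ)]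
        exact hγA
      have hpile : p i ≤ 1 / (4 * ((A:ℝ) - 1)) := by
        refine le_trans hismall ?_
        rw [div_le_div_iff₀ (by linarith) (by positivity)]
        nlinarith [hcase, hA1]
      have key1 : Δ + γ * (6*Δ^2) ≤ Δ * (1 + (A:ℝ)/8) := by
        have h := mul_le_mul_of_nonneg_right hγΔ (by linarith : (0:ℝ) ≤ Δ/8)
        linarith [h]
      have key2 : p i * (Δ + γ * (6*Δ^2)) ≤ (1 / (4 * ((A:ℝ) - 1))) * (Δ * (1 + (A:ℝ)/8)) := by
        refine mul_le_mul hpile key1 ?_ (by positivity)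
        positivity
      have key3 : (1 / (4 * ((A:ℝ) - 1))) * (Δ * (1 + (A:ℝ)/8)) ≤ 3*Δ/4 := by
        rw [div_mul_eq_mul_div, one_mul, div_le_iff₀ (by linarith : (0:ℝ) < 4 * ((A:ℝ) - 1))]
        have h := mul_le_mul_of_nonneg_left
          (show 1 + (A:ℝ)/8 ≤ 3 * ((A:ℝ) - 1) by linarith) hΔ0.le
        linarith [h]
      linarith [key2, key3]
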